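/- arXiv:1301.0164 — 3 statements merged into one kernel-verified Lean document; each statement's English description precedes it below -/
import Mathlib

section
/- For (γ, θ) ∈ ℝ² let ψ(γ, θ) denote the quadruple of quaternions (i, e^{γk}·i, e^{θk}·i, e^{(θ−γ)k}·i). Then ψ(γ₁, θ₁) and ψ(γ₂, θ₂) are simultaneously conjugate by a unit quaternion if and only if there exist integers m, n with (γ₂, θ₂) = (γ₁ + 2πm, θ₁ + 2πn) or (γ₂, θ₂) = (−γ₁ + 2πm, −θ₁ + 2πn). (Hence ψ induces a homeomorphism of the pillowcase ℝ²/∼, where (γ,θ) ∼ (−γ,−θ) ∼ (γ+2πm, θ+2πn), with the traceless character variety of the four-punctured sphere.) -/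
open Quaternion

noncomputable section

/-- The quaternion `i`. -/
def qi : ℍ[ℝ] := ⟨0, 1, 0, 0⟩

/-- The quaternion `k`. -/
def qk : ℍ[ℝ] := ⟨0, 0, 0, 1⟩

/-- The quaternionic exponential `e^{tQ} = cos t + (sin t) • Q` for a pure unit
quaternion `Q`. -/
def expQ (t : ℝ) (Q : ℍ[ℝ]) : ℍ[ℝ] := ((Real.cos t : ℝ) : ℍ[ℝ]) + (Real.sin t) • Q

/-- The quadruple `ψ(γ,θ) = (i, e^{γk}i, e^{θk}i, e^{(θ-γ)k}i)` of traceless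
quaternions. -/
def ψ (γ θ : ℝ) : ℍ[ℝ] × ℍ[ℝ] × ℍ[ℝ] × ℍ[ℝ] :=
  (qi, expQ γ qk * qi, expQ θ qk * qi, expQ (θ - γ) qk * qi)

/-! A unit quaternion `g` conjugating `i` to itself commutes with `i`, so `g = a + b i`.
Since `e^{tk} i = cos t · i + sin t · j`, the relation `g (cos s · i + sin s · j) = (cos t · i + sin t · j) g`
splits into `a (cos s, sin s) = a (cos t, sin t)` and `b (cos s, sin s) = b (cos t, -sin t)`:
if `b = 0` then `t ≡ s`, and otherwise `t ≡ -s` (mod `2π`), with the same sign for `γ` and for `θ`.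
Conversely `g = 1` and `g = i` realise the two cases. -/

open Real

@[simp] lemma re_qi : qi.re = 0 := rfl
@[simp] lemma imI_qi : qi.imI = 1 := rfl
@[simp] lemma imJ_qi : qi.imJ = 0 := rfl
@[simp] lemma imK_qi : qi.imK = 0 := rfl
@[simp] lemma re_qk : qk.re = 0 := rfl
@[simp] lemma imI_qk : qk.imI = 0 := rfl
@[simp] lemma imJ_qk : qk.imJ = 0 := rfl
@[simp] lemma imK_qk : qk.imK = 1 := rfl

lemma norm_qi : ‖qi‖ = 1 := by
  rw [norm_eq_sqrt_real_inner, Quaternion.inner_self, normSq_def']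
  simp

def unitIJ (t : ℝ) : ℍ[ℝ] := ⟨0, cos t, sin t, 0⟩

@[simp] lemma re_unitIJ (t : ℝ) : (unitIJ t).re = 0 := rfl
@[simp] lemma imI_unitIJ (t : ℝ) : (unitIJ t).imI = cos t := rfl
@[simp] lemma imJ_unitIJ (t : ℝ) : (unitIJ t).imJ = sin t := rfl
@[simp] lemma imK_unitIJ (t : ℝ) : (unitIJ t).imK = 0 := rfl

lemma expQ_qk_mul_qi (t : ℝ) : expQ t qk * qi = unitIJ t := by
  ext <;> simp [expQ, re_mul, imI_mul, imJ_mul, imK_mul]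

lemma unitIJ_eq_unitIJ_iff {s t : ℝ} : unitIJ s = unitIJ t ↔ ∃ m : ℤ, t = s + 2 * π * m := by
  constructor
  · intro h
    have hcos : cos t = cos s := (congrArg QuaternionAlgebra.imI h).symm
    have hsin : sin t = sin s := (congrArg QuaternionAlgebra.imJ h).symm
    obtain ⟨m, hm⟩ := Angle.angle_eq_iff_two_pi_dvd_sub.mp (Angle.cos_sin_inj hcos hsin)
    exact ⟨m, by linarith⟩
  · rintro ⟨m, rfl⟩
    rw [mul_comm, unitIJ, unitIJ, cos_add_int_mul_two_pi, sin_add_int_mul_two_pi]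

lemma ψ_add_int_mul_two_pi (γ θ : ℝ) (m n : ℤ) :
    ψ (γ + 2 * π * m) (θ + 2 * π * n) = ψ γ θ := by
  have hsub : θ + 2 * π * n - (γ + 2 * π * m) = θ - γ + 2 * π * (n - m : ℤ) := by
    push_cast; ring
  simp only [ψ, expQ_qk_mul_qi, hsub, (unitIJ_eq_unitIJ_iff.2 ⟨_, rfl⟩).symm]

lemma qi_mul_unitIJ (t : ℝ) : qi * unitIJ t = unitIJ (-t) * qi := by
  ext <;> simp [re_mul, imI_mul, imJ_mul, imK_mul]

lemma imJ_eq_zero_and_imK_eq_zero_of_mul_qi {g : ℍ[ℝ]} (h : g * qi = qi * g) :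
    g.imJ = 0 ∧ g.imK = 0 := by
  have hJ := congrArg QuaternionAlgebra.imJ h
  have hK := congrArg QuaternionAlgebra.imK h
  simp only [imJ_mul, imK_mul, re_qi, imI_qi, imJ_qi, imK_qi] at hJ hK
  constructor <;> linarith

section
variable {g : ℍ[ℝ]} {s t : ℝ} (hJ : g.imJ = 0) (hK : g.imK = 0)
  (h : g * unitIJ s = unitIJ t * g)
include hJ hK h

lemma unitIJ_eq_of_re_ne_zero (hre : g.re ≠ 0) : unitIJ s = unitIJ t := by
  have hcos := congrArg QuaternionAlgebra.imI h
  have hsin := congrArg QuaternionAlgebra.imJ h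
  simp only [imI_mul, imJ_mul, hJ, hK, re_unitIJ, imI_unitIJ, imJ_unitIJ, imK_unitIJ, mul_zero,
    zero_mul, add_zero, sub_zero, zero_add] at hcos hsin
  rw [mul_comm (cos t)] at hcos
  rw [mul_comm (sin t)] at hsin
  rw [unitIJ, unitIJ, mul_left_cancel₀ hre hcos, mul_left_cancel₀ hre hsin]

lemma unitIJ_neg_eq_of_imI_ne_zero (hI : g.imI ≠ 0) : unitIJ (-s) = unitIJ t := by
  have hcos := congrArg QuaternionAlgebra.re h
  have hsin := congrArg QuaternionAlgebra.imK h
  simp only [re_mul, imK_mul, hJ, hK, re_unitIJ, imI_unitIJ, imJ_unitIJ, imK_unitIJ, mul_zero,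
    zero_mul, add_zero, sub_zero, zero_add, zero_sub, neg_inj] at hcos hsin
  rw [mul_comm (cos t)] at hcos
  rw [mul_comm (sin t), ← mul_neg] at hsin
  rw [unitIJ, unitIJ, cos_neg, sin_neg, mul_left_cancel₀ hI hcos, mul_left_cancel₀ hI hsin, neg_neg]
end

/-- `ψ(γ₁,θ₁)` and `ψ(γ₂,θ₂)` are simultaneously conjugate by a unit quaternion if and
only if `(γ₂,θ₂) = ±(γ₁,θ₁) + (2πm, 2πn)` for some integers `m, n`; hence `ψ` induces a
homeomorphism of the pillowcase with the traceless character variety of the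
four-punctured sphere. -/
theorem psi_conjugate_iff_pillowcase (γ₁ θ₁ γ₂ θ₂ : ℝ) :
    (∃ g : ℍ[ℝ], ‖g‖ = 1 ∧
        g * (ψ γ₁ θ₁).1 * g⁻¹ = (ψ γ₂ θ₂).1 ∧
        g * (ψ γ₁ θ₁).2.1 * g⁻¹ = (ψ γ₂ θ₂).2.1 ∧
        g * (ψ γ₁ θ₁).2.2.1 * g⁻¹ = (ψ γ₂ θ₂).2.2.1 ∧
        g * (ψ γ₁ θ₁).2.2.2 * g⁻¹ = (ψ γ₂ θ₂).2.2.2) ↔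
      (∃ m n : ℤ,
        (γ₂ = γ₁ + 2 * Real.pi * m ∧ θ₂ = θ₁ + 2 * Real.pi * n) ∨
        (γ₂ = -γ₁ + 2 * Real.pi * m ∧ θ₂ = -θ₁ + 2 * Real.pi * n)) := by
  constructor
  · rintro ⟨g, hg, h₀, hγ, hθ, -⟩
    have hg₀ : g ≠ 0 := by rintro rfl; simp at hg
    simp only [ψ, expQ_qk_mul_qi, mul_inv_eq_iff_eq_mul₀ hg₀] at h₀ hγ hθ
    obtain ⟨hJ, hK⟩ := imJ_eq_zero_and_imK_eq_zero_of_mul_qi h₀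
    by_cases hI : g.imI = 0
    · have hre : g.re ≠ 0 := fun hre => hg₀ (QuaternionAlgebra.ext hre hI hJ hK)
      obtain ⟨m, hm⟩ := unitIJ_eq_unitIJ_iff.1 (unitIJ_eq_of_re_ne_zero hJ hK hγ hre)
      obtain ⟨n, hn⟩ := unitIJ_eq_unitIJ_iff.1 (unitIJ_eq_of_re_ne_zero hJ hK hθ hre)
      exact ⟨m, n, .inl ⟨hm, hn⟩⟩
    · obtain ⟨m, hm⟩ := unitIJ_eq_unitIJ_iff.1 (unitIJ_neg_eq_of_imI_ne_zero hJ hK hγ hI)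
      obtain ⟨n, hn⟩ := unitIJ_eq_unitIJ_iff.1 (unitIJ_neg_eq_of_imI_ne_zero hJ hK hθ hI)
      exact ⟨m, n, .inr ⟨hm, hn⟩⟩
  · rintro ⟨m, n, ⟨rfl, rfl⟩ | ⟨rfl, rfl⟩⟩ <;> rw [ψ_add_int_mul_two_pi]
    · exact ⟨1, norm_one, by simp⟩
    · have hqi : qi ≠ 0 := norm_ne_zero_iff.1 (norm_qi ▸ one_ne_zero)
      refine ⟨qi, norm_qi, ?_, ?_, ?_, ?_⟩ <;>
        simp only [ψ, expQ_qk_mul_qi, mul_inv_eq_iff_eq_mul₀ hqi, qi_mul_unitIJ, neg_sub, neg_sub_neg]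
end
end

section
/- Let f : ℝ → ℝ be odd and 2π-periodic with f vanishing on πℤ, let ε, β ∈ ℝ, and set c := ε·f(β). Define the quaternions a := i, b := e^{(π/2 + β + c)k}·i, h := −j·e^{−ck}, p := e^{ck}. Then: (1) a, b, h are pure unit quaternions; (2) c' := p⁻¹·b·p equals e^{(π/2 + β − c)k}·i and d := c'⁻¹·b·a equals e^{−2ck}·i, and both are pure unit quaternions; (3) (b·h)·p = p·(b·h); (4) (a·p⁻¹)·h = −h·(a·p⁻¹); and (5) b·h = e^{βk} and p = e^{ε f(β) k}, so the holonomy-perturbation condition ν = ε·f(β) holds with axis Q = k. (Thus the formulas ρ(β) of the main theorem define representations of the presented group ⟨a,b,c,d,w,h,p | c = p⁻¹bp, d = c⁻¹ba, [bh,p] = 1, [ap⁻¹,h] = (ha)w(ha)⁻¹⟩ sending a,b,c,d,h to traceless elements and w to −1, and satisfying the perturbation condition.) -/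
open Quaternion

noncomputable section

/-- The quaternion `j`. -/
def qj : ℍ[ℝ] := ⟨0, 0, 1, 0⟩

/-! The elements involved lie in the normaliser of the circle `t ↦ e^{tk}` in the unit
quaternions: the circle itself and the pure units `e^{tk} i`. Since `i` anticommutes with `k`,
moving `i` past `e^{tk}` inverts it, so `(e^{tk} i)(e^{sk} i) = -e^{(t-s)k}`, and every identity
reduces to adding angles; `j = k i` rewrites `h` as `-e^{(π/2+c)k} i`. -/

theorem norm_eq_one_iff_normSq_eq_one {q : ℍ[ℝ]} : ‖q‖ = 1 ↔ normSq q = 1 := by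
  rw [normSq_eq_norm_mul_self, ← mul_self_inj (norm_nonneg q) zero_le_one, mul_one]

structure IsPureUnit (q : ℍ[ℝ]) : Prop where
  norm_eq_one : ‖q‖ = 1
  re_eq_zero : q.re = 0

namespace IsPureUnit

variable {q : ℍ[ℝ]}

theorem normSq_eq_one (hq : IsPureUnit q) : normSq q = 1 :=
  norm_eq_one_iff_normSq_eq_one.mp hq.norm_eq_one

theorem mul_self (hq : IsPureUnit q) : q * q = -1 := by
  rw [← sq, sq_eq_neg_normSq.mpr hq.re_eq_zero, hq.normSq_eq_one, coe_one]

theorem inv_eq_neg (hq : IsPureUnit q) : q⁻¹ = -q :=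
  inv_eq_of_mul_eq_one_right (by rw [mul_neg, hq.mul_self, neg_neg])

theorem neg (hq : IsPureUnit q) : IsPureUnit (-q) :=
  ⟨by rw [norm_neg, hq.norm_eq_one], by rw [re_neg, hq.re_eq_zero, neg_zero]⟩

end IsPureUnit

section expQ

theorem expQ_eq_smul_one_add_smul (t : ℝ) (Q : ℍ[ℝ]) :
    expQ t Q = Real.cos t • (1 : ℍ[ℝ]) + Real.sin t • Q := by
  ext <;> simp [expQ]

theorem expQ_zero (Q : ℍ[ℝ]) : expQ 0 Q = 1 := by simp [expQ]

theorem expQ_pi_div_two (Q : ℍ[ℝ]) : expQ (Real.pi / 2) Q = Q := by simp [expQ]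

theorem expQ_sub_pi (t : ℝ) (Q : ℍ[ℝ]) : expQ (t - Real.pi) Q = -expQ t Q := by
  simp only [expQ, Real.cos_sub_pi, Real.sin_sub_pi, coe_neg, neg_smul]
  abel

theorem commute_expQ (t s : ℝ) (Q : ℍ[ℝ]) : Commute (expQ t Q) (expQ s Q) := by
  simp only [Commute, SemiconjBy, expQ_eq_smul_one_add_smul, add_mul, mul_add, smul_mul_assoc,
    mul_smul_comm, one_mul, mul_one]
  module

variable {P Q : ℍ[ℝ]}

theorem expQ_add (hQ : Q * Q = -1) (t s : ℝ) : expQ (t + s) Q = expQ t Q * expQ s Q := by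
  simp only [expQ_eq_smul_one_add_smul, Real.cos_add, Real.sin_add, add_mul, mul_add,
    smul_mul_assoc, mul_smul_comm, one_mul, mul_one, hQ]
  module

theorem expQ_neg (hQ : Q * Q = -1) (t : ℝ) : expQ (-t) Q = (expQ t Q)⁻¹ :=
  (inv_eq_of_mul_eq_one_right (by rw [← expQ_add hQ, add_neg_cancel, expQ_zero])).symm

theorem mul_expQ_of_anticommute (hPQ : P * Q = -(Q * P)) (t : ℝ) :
    P * expQ t Q = expQ (-t) Q * P := by
  simp only [expQ_eq_smul_one_add_smul, Real.cos_neg, Real.sin_neg, mul_add, add_mul,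
    smul_mul_assoc, mul_smul_comm, one_mul, mul_one, hPQ]
  module

theorem expQ_mul_mul_expQ_mul (hQ : Q * Q = -1) (hP : P * P = -1) (hPQ : P * Q = -(Q * P))
    (t s : ℝ) : expQ t Q * P * (expQ s Q * P) = -expQ (t - s) Q :=
  calc expQ t Q * P * (expQ s Q * P) = expQ t Q * (P * expQ s Q) * P := by
        simp only [mul_assoc]
    _ = expQ t Q * expQ (-s) Q * (P * P) := by
        rw [mul_expQ_of_anticommute hPQ]; simp only [mul_assoc]
    _ = -expQ (t - s) Q := by rw [hP, ← expQ_add hQ, mul_neg_one, sub_eq_add_neg]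

theorem inv_expQ_mul_expQ_mul_mul_expQ (hQ : Q * Q = -1) (hPQ : P * Q = -(Q * P)) (s t : ℝ) :
    (expQ s Q)⁻¹ * (expQ t Q * P) * expQ s Q = expQ (t - 2 * s) Q * P := by
  rw [← expQ_neg hQ, mul_assoc, mul_assoc, mul_expQ_of_anticommute hPQ, ← mul_assoc,
    ← mul_assoc, ← expQ_add hQ, ← expQ_add hQ]
  ring_nf

theorem norm_expQ (hQ : IsPureUnit Q) (t : ℝ) : ‖expQ t Q‖ = 1 := by
  rw [norm_eq_one_iff_normSq_eq_one]
  simp [expQ, normSq_add, normSq_coe, normSq_smul, hQ.normSq_eq_one, hQ.re_eq_zero]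

theorem re_mul_eq_zero_of_anticommute (hPQ : P * Q = -(Q * P)) : (Q * P).re = 0 := by
  have h := congrArg (·.re) hPQ
  simp only [re_neg, re_mul] at h ⊢
  linarith

theorem isPureUnit_expQ_mul (hQ : IsPureUnit Q) (hP : IsPureUnit P) (hPQ : P * Q = -(Q * P))
    (t : ℝ) : IsPureUnit (expQ t Q * P) where
  norm_eq_one := by rw [norm_mul, norm_expQ hQ, hP.norm_eq_one, one_mul]
  re_eq_zero := by
    rw [expQ_eq_smul_one_add_smul, add_mul, smul_mul_assoc, smul_mul_assoc, one_mul, re_add,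
      re_smul, re_smul, hP.re_eq_zero, re_mul_eq_zero_of_anticommute hPQ, smul_zero, smul_zero,
      add_zero]

end expQ

theorem isPureUnit_qi : IsPureUnit qi :=
  ⟨by rw [norm_eq_one_iff_normSq_eq_one, normSq_def']; simp [qi], rfl⟩

theorem isPureUnit_qk : IsPureUnit qk :=
  ⟨by rw [norm_eq_one_iff_normSq_eq_one, normSq_def']; simp [qk], rfl⟩

theorem qi_mul_qk : qi * qk = -(qk * qi) := by
  ext <;> simp [re_mul, imI_mul, imJ_mul, imK_mul] <;> simp [qi, qk]

theorem qk_mul_qi : qk * qi = qj := by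
  ext <;> simp [re_mul, imI_mul, imJ_mul, imK_mul] <;> simp [qi, qj, qk]

theorem expQ_qk_neg (t : ℝ) : expQ (-t) qk = (expQ t qk)⁻¹ :=
  expQ_neg isPureUnit_qk.mul_self t

theorem isPureUnit_expQ_qk_mul_qi (t : ℝ) : IsPureUnit (expQ t qk * qi) :=
  isPureUnit_expQ_mul isPureUnit_qk isPureUnit_qi qi_mul_qk t

theorem expQ_qk_mul_qi_mul_expQ_qk_mul_qi (t s : ℝ) :
    expQ t qk * qi * (expQ s qk * qi) = -expQ (t - s) qk :=
  expQ_mul_mul_expQ_mul isPureUnit_qk.mul_self isPureUnit_qi.mul_self qi_mul_qk t s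

theorem qi_mul_expQ_qk (t : ℝ) : qi * expQ t qk = expQ (-t) qk * qi :=
  mul_expQ_of_anticommute qi_mul_qk t

theorem qj_mul_expQ_qk (t : ℝ) : qj * expQ t qk = expQ (Real.pi / 2 - t) qk * qi := by
  rw [← qk_mul_qi, mul_assoc, qi_mul_expQ_qk, ← mul_assoc, sub_eq_add_neg,
    expQ_add isPureUnit_qk.mul_self, expQ_pi_div_two]

theorem perturbed_representation_formulas_general
    (f : ℝ → ℝ)
    (ε β c : ℝ) (hc : c = ε * f β)
    (a b h p c' d : ℍ[ℝ])
    (ha : a = qi)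
    (hb : b = expQ (Real.pi / 2 + β + c) qk * qi)
    (hh : h = -(qj * expQ (-c) qk))
    (hp : p = expQ c qk)
    (hc' : c' = p⁻¹ * b * p)
    (hd : d = c'⁻¹ * b * a) :
    (‖a‖ = 1 ∧ a.re = 0 ∧ ‖b‖ = 1 ∧ b.re = 0 ∧ ‖h‖ = 1 ∧ h.re = 0) ∧
    (c' = expQ (Real.pi / 2 + β - c) qk * qi ∧ d = expQ (-(2 * c)) qk * qi ∧
      ‖c'‖ = 1 ∧ c'.re = 0 ∧ ‖d‖ = 1 ∧ d.re = 0) ∧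
    ((b * h) * p = p * (b * h)) ∧
    ((a * p⁻¹) * h = -(h * (a * p⁻¹))) ∧
    (b * h = expQ β qk ∧ p = expQ (ε * f β) qk) := by
  have hh' : h = -(expQ (Real.pi / 2 + c) qk * qi) := by
    rw [hh, qj_mul_expQ_qk, sub_neg_eq_add]
  have hc'_eq : c' = expQ (Real.pi / 2 + β - c) qk * qi := by
    rw [hc', hp, hb, inv_expQ_mul_expQ_mul_mul_expQ isPureUnit_qk.mul_self qi_mul_qk]
    ring_nf
  have hd_eq : d = expQ (-(2 * c)) qk * qi := by
    rw [hd, hc'_eq, (isPureUnit_expQ_qk_mul_qi _).inv_eq_neg, hb, ha, neg_mul,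
      expQ_qk_mul_qi_mul_expQ_qk_mul_qi, neg_neg]
    ring_nf
  have hbh : b * h = expQ β qk := by
    rw [hb, hh', mul_neg, expQ_qk_mul_qi_mul_expQ_qk_mul_qi, neg_neg]
    ring_nf
  have hap : a * p⁻¹ = expQ c qk * qi := by
    rw [ha, hp, ← expQ_qk_neg, qi_mul_expQ_qk, neg_neg]
  have ha' := ha ▸ isPureUnit_qi
  have hb' := hb ▸ isPureUnit_expQ_qk_mul_qi _
  have hh'' := hh' ▸ (isPureUnit_expQ_qk_mul_qi _).neg
  have hc'' := hc'_eq ▸ isPureUnit_expQ_qk_mul_qi _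
  have hd' := hd_eq ▸ isPureUnit_expQ_qk_mul_qi _
  refine ⟨⟨ha'.1, ha'.2, hb'.1, hb'.2, hh''.1, hh''.2⟩,
    ⟨hc'_eq, hd_eq, hc''.1, hc''.2, hd'.1, hd'.2⟩, ?_, ?_, hbh, hc ▸ hp⟩
  · rw [hbh, hp]
    exact (commute_expQ β c qk).eq
  · rw [hap, hh', mul_neg, neg_mul, neg_neg, expQ_qk_mul_qi_mul_expQ_qk_mul_qi,
      expQ_qk_mul_qi_mul_expQ_qk_mul_qi, neg_neg, ← expQ_sub_pi]
    ring_nf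

/-- The explicit formulas of the main perturbation theorem define perturbed traceless
representations: with `c = ε f(β)`, `a = i`, `b = e^{(π/2+β+c)k}i`, `h = -j e^{-ck}`,
`p = e^{ck}`, `c' = p⁻¹bp` and `d = c'⁻¹ba`, one has (1) `a,b,h` pure unit;
(2) `c' = e^{(π/2+β-c)k}i`, `d = e^{-2ck}i`, both pure unit; (3) `bh` commutes with `p`;
(4) `(ap⁻¹)h = -h(ap⁻¹)`; (5) `bh = e^{βk}` and `p = e^{εf(β)k}`, i.e. the holonomy
perturbation condition holds with axis `k`. -/
theorem perturbed_representation_formulas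
    (f : ℝ → ℝ)
    (hodd : ∀ x : ℝ, f (-x) = -f x)
    (hper : ∀ x : ℝ, f (x + 2 * Real.pi) = f x)
    (hvanish : ∀ n : ℤ, f (Real.pi * n) = 0)
    (ε β c : ℝ) (hc : c = ε * f β)
    (a b h p c' d : ℍ[ℝ])
    (ha : a = qi)
    (hb : b = expQ (Real.pi / 2 + β + c) qk * qi)
    (hh : h = -(qj * expQ (-c) qk))
    (hp : p = expQ c qk)
    (hc' : c' = p⁻¹ * b * p)
    (hd : d = c'⁻¹ * b * a) :
    (‖a‖ = 1 ∧ a.re = 0 ∧ ‖b‖ = 1 ∧ b.re = 0 ∧ ‖h‖ = 1 ∧ h.re = 0) ∧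
    (c' = expQ (Real.pi / 2 + β - c) qk * qi ∧ d = expQ (-(2 * c)) qk * qi ∧
      ‖c'‖ = 1 ∧ c'.re = 0 ∧ ‖d‖ = 1 ∧ d.re = 0) ∧
    ((b * h) * p = p * (b * h)) ∧
    ((a * p⁻¹) * h = -(h * (a * p⁻¹))) ∧
    (b * h = expQ β qk ∧ p = expQ (ε * f β) qk) :=
  perturbed_representation_formulas_general f ε β c hc a b h p c' d ha hb hh hp hc' hd
end
end

section
/- Let p, q, r, s be integers with p·r + q·s = 1, and let M, N be unit quaternions with M^p · N^q = 1. Suppose Re(M^{s+p} · N^{q−r}) = 0 and Re(N^{−r} · M^{s}) = 0, and that the two quaternions M^{s+p}·N^{q−r} and N^{−r}·M^{s} commute. Then M·N = N·M. (This is the statement that for the (p,q) torus knot the restriction to the pillowcase takes every non-abelian traceless representation to a non-abelian point: if the restriction of a traceless representation of the torus knot group to the four-punctured sphere is abelian, the representation itself is abelian.) -/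
open Quaternion

/-!
Put `X = M ^ s` and `Y = N ^ (-r)`. The relation `M ^ p * N ^ q = 1` turns the two traceless
elements into `u = X * Y` and `v = Y * X`; as unit quaternions of trace zero both square to `-1`,
so commuting forces `v = u` or `v = -u`.

If `Y * X = X * Y`, then `N ^ r` commutes with `M ^ s` and with `M ^ p = N ^ (-q)`, hence with
`M = M ^ (p * r + q * s)`; likewise `M` commutes with `N ^ r` and `N ^ q`, hence with `N`.
If `Y * X = -(X * Y)`, then `X` and `Y` are traceless (conjugation preserves the real part), so
`(M ^ s) ^ 2 = (N ^ r) ^ 2 = -1`; but the torus knot relation then forces `N ^ 2 = 1`, whence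
`(N ^ r) ^ 2 = 1`.
-/

section GroupWithZero

variable {G₀ : Type*} [GroupWithZero G₀]

theorem Commute.of_zpow_right_of_mul_add_mul_eq_one {a b : G₀} (hb : b ≠ 0) {m n x y : ℤ}
    (hm : Commute a (b ^ m)) (hn : Commute a (b ^ n)) (hmn : m * x + n * y = 1) :
    Commute a b := by
  have h := (hm.zpow_right₀ x).mul_right (hn.zpow_right₀ y)
  rwa [← zpow_mul, ← zpow_mul, ← zpow_add₀ hb, hmn, zpow_one] at h

variable {g h : G₀} {p q r s : ℤ}

theorem commute_of_zpow_mul_zpow_eq_one (hg : g ≠ 0) (hh : h ≠ 0) (hpqrs : p * r + q * s = 1)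
    (hgh : g ^ p * h ^ q = 1) (hc : Commute (g ^ s) (h ^ r)) : Commute g h := by
  have hgp : g ^ p = h ^ (-q) := by rw [zpow_neg]; exact eq_inv_of_mul_eq_one_left hgh
  have hhq : h ^ q = g ^ (-p) := by rw [zpow_neg]; exact eq_inv_of_mul_eq_one_right hgh
  have hhr : Commute (h ^ r) g :=
    .of_zpow_right_of_mul_add_mul_eq_one (m := p) (x := r) (y := q) hg
      (by rw [hgp]; exact Commute.zpow_zpow_self₀ h r (-q)) hc.symm (by linear_combination hpqrs)
  exact .of_zpow_right_of_mul_add_mul_eq_one (m := r) (x := p) (y := s) hh hhr.symm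
    (by rw [hhq]; exact (Commute.refl g).zpow_right₀ (-p)) (by linear_combination hpqrs)

theorem zpow_eq_one_of_zpow_mul_zpow_eq_one (hh : h ≠ 0) (hpqrs : p * r + q * s = 1)
    (hgh : g ^ p * h ^ q = 1) {n : ℤ} (hn : (g ^ s) ^ n = (h ^ r) ^ n) : h ^ n = 1 := by
  have hhq : h ^ q = g ^ (-p) := by rw [zpow_neg]; exact eq_inv_of_mul_eq_one_right hgh
  calc h ^ n = ((h ^ r) ^ n) ^ p * ((h ^ q) ^ s) ^ n := by
        simp only [← zpow_mul]
        rw [← zpow_add₀ hh]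
        congr 1
        linear_combination -n * hpqrs
    _ = ((h ^ r) ^ n) ^ p * ((h ^ r) ^ n) ^ (-p) := by
        rw [hhq, zpow_comm g, zpow_comm _ (-p), hn]
    _ = 1 := by
        rw [zpow_neg, mul_inv_cancel₀ (zpow_ne_zero _ (zpow_ne_zero _ (zpow_ne_zero _ hh)))]

end GroupWithZero

namespace Quaternion

theorem sq_eq_neg_one_of_norm_eq_one_of_re_eq_zero {a : ℍ} (hn : ‖a‖ = 1) (hr : a.re = 0) :
    a ^ 2 = -1 := by
  rw [sq_eq_neg_normSq.mpr hr, normSq_eq_norm_mul_self, hn, mul_one, coe_one]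

theorem re_mul_comm (a b : ℍ) : (a * b).re = (b * a).re := by
  simp only [re_mul]; ring

theorem re_eq_zero_of_mul_eq_neg_mul {a b : ℍ} (hb : b ≠ 0) (h : b * a = -(a * b)) :
    a.re = 0 := by
  have hconj : b * a * b⁻¹ = -a := by rw [h, neg_mul, mul_inv_cancel_right₀ hb]
  have hre := congrArg (·.re) hconj
  rw [re_mul_comm, ← mul_assoc, inv_mul_cancel₀ hb, one_mul, re_neg] at hre
  linarith

theorem zpow_mul_zpow_neg_ne_neg {M N : ℍ} {p q r s : ℤ} (hpqrs : p * r + q * s = 1)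
    (hM : ‖M‖ = 1) (hN : ‖N‖ = 1) (hMN : M ^ p * N ^ q = 1) :
    M ^ s * N ^ (-r) ≠ -(N ^ (-r) * M ^ s) := by
  intro hanti
  have hM0 : M ≠ 0 := norm_ne_zero_iff.mp (by rw [hM]; exact one_ne_zero)
  have hN0 : N ≠ 0 := norm_ne_zero_iff.mp (by rw [hN]; exact one_ne_zero)
  have hX : (M ^ s) ^ (2 : ℤ) = -1 := by
    rw [zpow_ofNat]
    exact sq_eq_neg_one_of_norm_eq_one_of_re_eq_zero (by rw [norm_zpow, hM, one_zpow])
      (re_eq_zero_of_mul_eq_neg_mul (zpow_ne_zero _ hN0) (by rw [hanti, neg_neg]))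
  have hY : (N ^ r) ^ (2 : ℤ) = -1 := by
    have h := sq_eq_neg_one_of_norm_eq_one_of_re_eq_zero (by rw [norm_zpow, hN, one_zpow])
      (re_eq_zero_of_mul_eq_neg_mul (zpow_ne_zero _ hM0) hanti)
    rwa [zpow_neg, inv_pow, inv_eq_iff_eq_inv, inv_neg, inv_one, ← zpow_ofNat] at h
  have hN2 := zpow_eq_one_of_zpow_mul_zpow_eq_one hN0 hpqrs hMN (hX.trans hY.symm)
  have h : (-1 : ℍ) = 1 := by rw [← hY, zpow_comm, hN2, one_zpow]
  exact absurd (congrArg (·.re) h) (by norm_num)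

end Quaternion

/-- For the `(p,q)` torus knot the restriction to the pillowcase takes non-abelian
traceless representations to non-abelian points: if `M, N` are unit quaternions with
`M^p N^q = 1`, `M^{s+p}N^{q−r}` and `N^{−r}M^{s}` traceless, and `M^{s+p}N^{q−r}`
commutes with `N^{−r}M^{s}`, then `M` and `N` commute. -/
theorem torus_knot_abelian_image (p q r s : ℤ) (hpqrs : p * r + q * s = 1)
    (M N : ℍ[ℝ]) (hMnorm : ‖M‖ = 1) (hNnorm : ‖N‖ = 1)
    (hMN : M ^ p * N ^ q = 1)
    (h1 : (M ^ (s + p) * N ^ (q - r)).re = 0)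
    (h2 : (N ^ (-r) * M ^ s).re = 0)
    (hcomm : (M ^ (s + p) * N ^ (q - r)) * (N ^ (-r) * M ^ s)
      = (N ^ (-r) * M ^ s) * (M ^ (s + p) * N ^ (q - r))) :
    M * N = N * M := by
  have hM : M ≠ 0 := norm_ne_zero_iff.mp (by rw [hMnorm]; exact one_ne_zero)
  have hN : N ≠ 0 := norm_ne_zero_iff.mp (by rw [hNnorm]; exact one_ne_zero)
  have hXY : M ^ (s + p) * N ^ (q - r) = M ^ s * N ^ (-r) := by
    rw [zpow_add₀ hM, sub_eq_add_neg, zpow_add₀ hN, mul_assoc, ← mul_assoc (M ^ p), hMN,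
      one_mul]
  rw [hXY] at h1 hcomm
  have hn : ‖M ^ s * N ^ (-r)‖ = 1 := by
    simp only [norm_mul, norm_zpow, hMnorm, hNnorm, one_zpow, one_mul]
  have hu := sq_eq_neg_one_of_norm_eq_one_of_re_eq_zero hn h1
  have hv := sq_eq_neg_one_of_norm_eq_one_of_re_eq_zero
    (by rwa [norm_mul, mul_comm, ← norm_mul]) h2
  rcases (Commute.mul_self_eq_mul_self_iff hcomm).mp (by rw [← sq, ← sq, hu, hv])
    with hc | hanti
  · refine commute_of_zpow_mul_zpow_eq_one hM hN hpqrs hMN ?_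
    have hc' : Commute (M ^ s) (N ^ r)⁻¹ := by rw [← zpow_neg]; exact hc
    exact Commute.inv_right_iff₀.mp hc'
  · exact absurd hanti (zpow_mul_zpow_neg_ne_neg hpqrs hMnorm hNnorm hMN)
end
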